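/- arXiv:1303.2297 — 6 statements merged into one kernel-verified Lean document; each statement's English description precedes it below -/
import Mathlib

section
/- The sequence of Favard constants K_n (with K_0 = 1, K_1 = 1/4) satisfies the recurrence K_{n+1} = (1/(8(n+1))) ∑_{k=0}^n K_k K_{n-k} for all n ≥ 1. -/
open scoped BigOperators

/-- The Euler numbers (generating function `sech`): `E 0 = 1`, odd-index ones vanish,
and the even-index ones satisfy the standard recurrence coming from `cosh t · sech t = 1`. -/
def eulerNumber : ℕ → ℚ
  | 0 => 1
  | n + 1 =>
    if Odd (n + 1) then 0
    else -∑ k : Fin (n + 1),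
      if Even (k : ℕ) then ((n + 1).choose k : ℚ) * eulerNumber k else 0

/-- The Favard constants `K n`. -/
def favardK (n : ℕ) : ℚ :=
  if Odd n then
    ((2 ^ (n + 1) - 1) * |bernoulli (n + 1)|) / (2 ^ (n - 1) * Nat.factorial (n + 1))
  else |eulerNumber n| / (4 ^ n * Nat.factorial n)

/-!
The generating function `V(x) = ∑ Kₙ xⁿ` is `sec (x/4) + tan (x/4)`: the Euler numbers are the
Taylor coefficients of `sec`, and the Bernoulli numbers give those of `tan` through
`x tan x = B(2ix) - B(4ix) - ix`, where `B(t) = t / (eᵗ - 1)`. Differentiating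
`V cos (x/4) = 1 + sin (x/4)` and using `sin² + cos² = 1` gives the Riccati equation
`8 V' = 1 + V²`, whose coefficients are the recurrence. The recurrence also shows that every
coefficient of `V` is positive, which is why `Kₙ` can be written with absolute values.
-/

open PowerSeries Nat Finset

namespace PowerSeries

section

variable {A : Type*} [CommRing A] [Algebra ℚ A]

theorem derivative_sin : d⁄dX A (sin A) = cos A := by
  ext n
  rw [coeff_derivative]
  simp only [sin, cos, coeff_mk]
  rcases n.even_or_odd' with ⟨k, rfl | rfl⟩
  · rw [if_neg (Nat.not_even_iff_odd.mpr (odd_two_mul_add_one k)), if_pos (even_two_mul k),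
      ← map_natCast (algebraMap ℚ A), ← map_one (algebraMap ℚ A), ← map_add, ← map_mul,
      show (2 * k + 1) / 2 = k by omega, show 2 * k / 2 = k by omega, factorial_succ]
    congr 1
    push_cast
    field_simp
  · rw [if_pos ⟨k + 1, by ring⟩, if_neg (Nat.not_even_iff_odd.mpr (odd_two_mul_add_one k)),
      zero_mul]

theorem derivative_cos : d⁄dX A (cos A) = -sin A := by
  ext n
  rw [coeff_derivative, map_neg]
  simp only [sin, cos, coeff_mk]
  rcases n.even_or_odd' with ⟨k, rfl | rfl⟩
  · rw [if_neg (Nat.not_even_iff_odd.mpr (odd_two_mul_add_one k)), if_pos (even_two_mul k),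
      zero_mul, neg_zero]
  · rw [if_pos ⟨k + 1, by ring⟩, if_neg (Nat.not_even_iff_odd.mpr (odd_two_mul_add_one k)),
      ← map_natCast (algebraMap ℚ A), ← map_one (algebraMap ℚ A), ← map_add, ← map_mul,
      ← map_neg, show (2 * k + 1 + 1) / 2 = k + 1 by omega, show (2 * k + 1) / 2 = k by omega,
      factorial_succ]
    congr 1
    push_cast
    field_simp
    ring

theorem sin_sq_add_cos_sq [IsAddTorsionFree A] : sin A ^ 2 + cos A ^ 2 = 1 := by
  apply derivative.ext
  · rw [map_add, derivative_pow, derivative_pow, derivative_sin, derivative_cos, derivative_one]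
    ring
  · simp [sin, cos]

theorem rescale_exp_eq_cos_add_sin {i : A} (hi : i ^ 2 = -1) :
    rescale i (exp A) = cos A + C i * sin A := by
  ext n
  rw [coeff_rescale, coeff_exp, map_add, coeff_C_mul]
  simp only [sin, cos, coeff_mk, div_eq_mul_one_div ((-1 : ℚ) ^ _), map_mul, map_pow, map_neg,
    map_one]
  rcases n.even_or_odd' with ⟨k, rfl | rfl⟩
  · have heven : Even (2 * k) := even_two_mul k
    rw [if_pos heven, if_pos heven, mul_zero, add_zero, pow_mul, hi,
      show 2 * k / 2 = k by omega]
  · have hodd : ¬Even (2 * k + 1) := by rw [Nat.not_even_iff_odd]; exact odd_two_mul_add_one k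
    rw [if_neg hodd, if_neg hodd, zero_add, pow_succ, pow_mul, hi,
      show (2 * k + 1) / 2 = k by omega]
    ring

theorem sin_ne_zero [Nontrivial A] : sin A ≠ 0 := fun h => by
  simpa [sin] using congrArg (coeff 1) h

theorem cos_ne_zero [Nontrivial A] : cos A ≠ 0 := fun h => by
  simpa [cos] using congrArg (coeff 0) h

theorem rescale_bernoulliPowerSeries_mul (a : A) :
    rescale a (bernoulliPowerSeries A) * (rescale a (exp A) - 1) = C a * X := by
  rw [← rescale_X, ← bernoulliPowerSeries_mul_exp_sub_one, map_mul, map_sub, map_one]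

end

section Riccati

variable {R : Type*} [CommRing R]

theorem derivative_rescale (a : R) (f : R⟦X⟧) :
    d⁄dX R (rescale a f) = C a * rescale a (d⁄dX R f) := by
  ext n
  rw [coeff_derivative, coeff_rescale, coeff_C_mul, coeff_rescale, coeff_derivative, pow_succ]
  ring

theorem coeff_succ_of_C_mul_derivative_eq_one_add_sq {a : R} {f : R⟦X⟧}
    (h : C a * d⁄dX R f = 1 + f ^ 2) (n : ℕ) : a * (n + 1) * coeff (n + 1) f =
      (if n = 0 then 1 else 0) + ∑ k ∈ range (n + 1), coeff k f * coeff (n - k) f := by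
  have h := congrArg (coeff n) h
  rw [coeff_C_mul, coeff_derivative, map_add, coeff_one, sq, coeff_mul,
    Nat.sum_antidiagonal_eq_sum_range_succ_mk] at h
  rw [← h]
  ring

theorem coeff_pos_of_C_mul_derivative_eq_one_add_sq {K : Type*} [Field K] [LinearOrder K]
    [IsStrictOrderedRing K] {a : K} (ha : 0 < a) {f : K⟦X⟧} (h : C a * d⁄dX K f = 1 + f ^ 2)
    (h₀ : 0 < coeff 0 f) (n : ℕ) : 0 < coeff n f := by
  induction n using Nat.strong_induction_on with
  | _ n ih =>
    rcases n with _ | n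
    · exact h₀
    have hsum : 0 < ∑ k ∈ range (n + 1), coeff k f * coeff (n - k) f :=
      sum_pos (fun k hk => mul_pos (ih k (by simp at hk; omega)) (ih (n - k) (by omega)))
        nonempty_range_add_one
    have hrec := coeff_succ_of_C_mul_derivative_eq_one_add_sq h n
    have hpos : 0 < a * (n + 1) * coeff (n + 1) f := by
      rw [hrec]; split_ifs <;> positivity
    exact pos_of_mul_pos_right hpos (by positivity)

end Riccati

end PowerSeries

theorem eulerNumber_of_odd {n : ℕ} (h : Odd n) : eulerNumber n = 0 := by
  cases n with
  | zero => simp at h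
  | succ n => rw [eulerNumber, if_pos h]

theorem sum_choose_mul_eulerNumber {n : ℕ} (hn : Even n) (hn₀ : n ≠ 0) :
    ∑ i ∈ range (n + 1), (if Even i then (n.choose i : ℚ) * eulerNumber i else 0) = 0 := by
  obtain ⟨n, rfl⟩ := Nat.exists_eq_succ_of_ne_zero hn₀
  rw [sum_range_succ, if_pos hn, Nat.choose_self, Nat.cast_one, one_mul, eulerNumber.eq_2,
    if_neg (Nat.not_odd_iff_even.mpr hn),
    Fin.sum_univ_eq_sum_range
      (fun i => if Even i then ((n + 1).choose i : ℚ) * eulerNumber i else 0), add_neg_cancel]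

def secSeries : ℚ⟦X⟧ :=
  mk fun n => (-1) ^ (n / 2) * eulerNumber n / n !

theorem coeff_secSeries_mul_coeff_cos_of_even {i j : ℕ} (h : Even (i + j)) :
    coeff i secSeries * coeff j (cos ℚ) = (-1) ^ ((i + j) / 2) / (i + j)! *
      (if Even i then ((i + j).choose i : ℚ) * eulerNumber i else 0) := by
  simp only [secSeries, cos, coeff_mk, Algebra.algebraMap_self, RingHom.id_apply]
  by_cases hi : Even i
  · obtain ⟨a, rfl⟩ := hi
    obtain ⟨b, rfl⟩ := (Nat.even_add.mp h).mp ⟨a, rfl⟩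
    have hchoose : ((a + a + (b + b)).choose (a + a) : ℚ) ≠ 0 := by
      exact_mod_cast (Nat.choose_pos (by omega)).ne'
    rw [if_pos ⟨b, rfl⟩, if_pos ⟨a, rfl⟩, show (a + a + (b + b)) / 2 = a + b by omega,
      show (a + a) / 2 = a by omega, show (b + b) / 2 = b by omega,
      ← Nat.add_choose_mul_factorial_mul_factorial (a + a) (b + b), ← Nat.choose_symm_add,
      Nat.cast_mul, Nat.cast_mul, pow_add]
    field_simp
  · rw [eulerNumber_of_odd (Nat.not_even_iff_odd.mp hi), if_neg hi]
    simp

theorem coeff_secSeries_mul_coeff_cos_of_odd {i j : ℕ} (h : Odd (i + j)) :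
    coeff i secSeries * coeff j (cos ℚ) = 0 := by
  simp only [secSeries, cos, coeff_mk]
  rcases i.even_or_odd with hi | hi
  · rw [if_neg (Nat.not_even_iff_odd.mpr ((Nat.odd_add'.mp h).mpr hi)), mul_zero]
  · rw [eulerNumber_of_odd hi, mul_zero, zero_div, zero_mul]

theorem secSeries_mul_cos : secSeries * cos ℚ = 1 := by
  ext n
  rw [coeff_mul, coeff_one]
  split_ifs with hn₀
  · simp [hn₀, secSeries, cos, eulerNumber]
  rcases n.even_or_odd with hn | hn
  · have hterm : ∀ p ∈ antidiagonal n, coeff p.1 secSeries * coeff p.2 (cos ℚ) =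
        (-1) ^ (n / 2) / n ! *
          (if Even p.1 then (n.choose p.1 : ℚ) * eulerNumber p.1 else 0) := by
      rintro ⟨i, j⟩ hij
      rw [HasAntidiagonal.mem_antidiagonal] at hij
      subst hij
      exact coeff_secSeries_mul_coeff_cos_of_even hn
    rw [sum_congr rfl hterm, ← mul_sum, Nat.sum_antidiagonal_eq_sum_range_succ
        (fun i _ => if Even i then (n.choose i : ℚ) * eulerNumber i else 0),
      sum_choose_mul_eulerNumber hn hn₀, mul_zero]
  · refine sum_eq_zero fun ⟨i, j⟩ hij => ?_
    rw [HasAntidiagonal.mem_antidiagonal] at hij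
    subst hij
    exact coeff_secSeries_mul_coeff_cos_of_odd hn

def tanSeries : ℚ⟦X⟧ :=
  mk fun n => if Even n then 0 else
    (-1) ^ (n / 2) * 2 ^ (n + 1) * (2 ^ (n + 1) - 1) * bernoulli (n + 1) / (n + 1)!

theorem X_mul_map_tanSeries {A : Type*} [CommRing A] [Algebra ℚ A] {i : A} (hi : i ^ 2 = -1) :
    X * map (algebraMap ℚ A) tanSeries =
      rescale (2 * i) (bernoulliPowerSeries A) - rescale (4 * i) (bernoulliPowerSeries A) -
        C i * X := by
  ext m
  rw [map_sub, map_sub, coeff_rescale, coeff_rescale, coeff_C_mul, coeff_X,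
    bernoulliPowerSeries, coeff_mk]
  rcases m with _ | n
  · simp
  rw [coeff_succ_X_mul, coeff_map, tanSeries, coeff_mk]
  rcases n.even_or_odd' with ⟨k, rfl | rfl⟩
  · rw [if_pos (even_two_mul k), map_zero]
    rcases k with _ | k
    · simp only [mul_zero, zero_add, pow_one, bernoulli_one, factorial_one, cast_one, div_one,
        if_true]
      rw [← sub_mul, show 2 * i - 4 * i = algebraMap ℚ A (-2) * i by
        rw [map_neg, map_ofNat]; ring, mul_comm, ← mul_assoc, ← map_mul]
      norm_num
    · rw [bernoulli_eq_zero_of_odd (odd_two_mul_add_one _) (by omega), if_neg (by omega)]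
      simp
  · rw [if_neg (by rw [Nat.not_even_iff_odd]; exact odd_two_mul_add_one k), if_neg (by omega),
      mul_pow, mul_pow, show 2 * k + 1 + 1 = 2 * (k + 1) by ring, pow_mul i, hi,
      show (2 * k + 1) / 2 = k by omega]
    have hq : (-1) ^ k * 2 ^ (2 * (k + 1)) * (2 ^ (2 * (k + 1)) - 1) *
        bernoulli (2 * (k + 1)) / ((2 * (k + 1))! : ℚ) =
        (2 ^ (2 * (k + 1)) - 4 ^ (2 * (k + 1))) * (-1) ^ (k + 1) *
          (bernoulli (2 * (k + 1)) / (2 * (k + 1))!) := by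
      rw [show (4 : ℚ) = 2 ^ 2 by norm_num, ← pow_mul]
      ring
    rw [hq, map_mul]
    simp only [map_mul, map_sub, map_pow, map_neg, map_one, map_ofNat]
    ring

open Complex in
theorem map_tanSeries_mul_cos : map (algebraMap ℚ ℂ) tanSeries * cos ℂ = sin ℂ := by
  set i : ℂ⟦X⟧ := C I
  set c := cos ℂ
  set s := sin ℂ
  set u := rescale I (exp ℂ)
  set b₂ := rescale (2 * I) (bernoulliPowerSeries ℂ)
  set b₄ := rescale (4 * I) (bernoulliPowerSeries ℂ)
  have hi : i ^ 2 = -1 := by rw [← map_pow, I_sq, map_neg, map_one]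
  have hpy : s ^ 2 + c ^ 2 = 1 := sin_sq_add_cos_sq
  have hu : u = c + i * s := rescale_exp_eq_cos_add_sin I_sq
  have hu₂ : rescale (2 * I) (exp ℂ) = u ^ 2 := by
    rw [two_mul, ← exp_mul_exp_eq_exp_add, sq]
  have hu₄ : rescale (4 * I) (exp ℂ) = u ^ 4 := by
    rw [show 4 * I = 2 * I + 2 * I by ring, ← exp_mul_exp_eq_exp_add, hu₂]; ring
  have hsub : u ^ 2 - 1 = 2 * i * s * u := by rw [hu]; linear_combination hpy - s ^ 2 * hi
  have hadd : u ^ 2 + 1 = 2 * c * u := by rw [hu]; linear_combination -hpy + s ^ 2 * hi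
  have hb₂ : b₂ * s * u = X := by
    have h := rescale_bernoulliPowerSeries_mul (2 * I)
    have h2i : C (2 * I) = 2 * i := by rw [map_mul, map_ofNat]
    rw [hu₂, h2i] at h
    refine mul_left_cancel₀ (show 2 * i ≠ 0 by rw [← h2i]; simp [I_ne_zero]) ?_
    linear_combination h - b₂ * hsub
  have hb₄ : b₄ * s * c * u ^ 2 = X := by
    have h := rescale_bernoulliPowerSeries_mul (4 * I)
    have h4i : C (4 * I) = 4 * i := by rw [map_mul, map_ofNat]
    rw [hu₄, h4i] at h
    refine mul_left_cancel₀ (show 4 * i ≠ 0 by rw [← h4i]; simp [I_ne_zero]) ?_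
    linear_combination h - b₄ * ((u ^ 2 + 1) * hsub + 2 * i * s * u * hadd)
  have hT := X_mul_map_tanSeries I_sq
  -- Multiplying the goal by `X * s * u ^ 2` makes `hT`, `hb₂` and `hb₄` applicable.
  have hunit : IsUnit (u ^ 2) := ((isUnit_exp ℂ).map (rescale I)).pow 2
  refine mul_left_cancel₀ X_ne_zero (hunit.mul_right_cancel (mul_right_cancel₀ sin_ne_zero ?_))
  rw [hu] at hb₂ hb₄ ⊢
  linear_combination (c * s * (c + i * s) ^ 2) * hT + c * (c + i * s) * hb₂ - hb₄ +
    X * (1 + s ^ 2 - i * c * s) * hpy - X * (2 * c ^ 2 * s ^ 2 + s ^ 4 + i * c * s ^ 3) * hi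

theorem tanSeries_mul_cos : tanSeries * cos ℚ = sin ℚ :=
  map_injective (algebraMap ℚ ℂ) (algebraMap ℚ ℂ).injective <| by
    rw [map_mul, map_cos, map_sin, map_tanSeries_mul_cos]

theorem two_mul_derivative_secSeries_add_tanSeries :
    2 * d⁄dX ℚ (secSeries + tanSeries) = 1 + (secSeries + tanSeries) ^ 2 := by
  set F := secSeries + tanSeries
  have hF : F * cos ℚ = 1 + sin ℚ := by rw [add_mul, secSeries_mul_cos, tanSeries_mul_cos]
  have hF' : d⁄dX ℚ F * cos ℚ = cos ℚ + F * sin ℚ := by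
    have h := congrArg (d⁄dX ℚ) hF
    rw [Derivation.leibniz, smul_eq_mul, smul_eq_mul, derivative_cos,
      map_add (d⁄dX ℚ) 1, derivative_one, derivative_sin, zero_add] at h
    linear_combination h
  refine mul_right_cancel₀ (pow_ne_zero 2 cos_ne_zero) ?_
  linear_combination 2 * cos ℚ * hF' + (sin ℚ - F * cos ℚ - 1) * hF +
    sin_sq_add_cos_sq (A := ℚ)

noncomputable def favardSeries : ℚ⟦X⟧ := rescale (1 / 4) (secSeries + tanSeries)

theorem eight_mul_derivative_favardSeries :
    C 8 * d⁄dX ℚ favardSeries = 1 + favardSeries ^ 2 := by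
  rw [favardSeries, derivative_rescale, ← mul_assoc, ← map_mul,
    show (8 : ℚ) * (1 / 4) = 2 by norm_num, map_ofNat, ← map_ofNat (rescale (1 / 4 : ℚ)) 2,
    ← map_mul, two_mul_derivative_secSeries_add_tanSeries, map_add, map_one, map_pow]

theorem favardK_eq_abs_coeff (n : ℕ) : favardK n = |coeff n favardSeries| := by
  rw [favardK, favardSeries, coeff_rescale, map_add, secSeries, tanSeries, coeff_mk, coeff_mk,
    abs_mul, abs_pow, abs_of_pos (show (0 : ℚ) < 1 / 4 by norm_num)]
  rcases n.even_or_odd' with ⟨k, rfl | rfl⟩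
  · rw [if_neg (Nat.not_odd_iff_even.mpr (even_two_mul k)), if_pos (even_two_mul k)]
    simp only [add_zero, one_div_pow, abs_mul, abs_div, abs_pow, abs_neg, abs_one, one_pow,
      one_mul, Nat.abs_cast]
    field_simp
  · have hodd := odd_two_mul_add_one k
    have hpow : (0 : ℚ) < 2 ^ (2 * k + 1 + 1) - 1 := by
      rw [sub_pos]; exact one_lt_pow₀ (by norm_num) (by omega)
    rw [if_pos hodd, if_neg (Nat.not_even_iff_odd.mpr hodd), eulerNumber_of_odd hodd,
      show 2 * k + 1 - 1 = 2 * k by omega]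
    simp only [mul_zero, zero_div, zero_add, one_div_pow, abs_mul, abs_div, abs_pow, abs_neg,
      abs_one, one_pow, one_mul, abs_of_pos hpow, Nat.abs_cast, abs_two]
    rw [show (4 : ℚ) = 2 ^ 2 by norm_num, ← pow_mul]
    field_simp
    ring

theorem favardK_eq_coeff (n : ℕ) : favardK n = coeff n favardSeries := by
  refine (favardK_eq_abs_coeff n).trans (abs_of_pos ?_)
  refine coeff_pos_of_C_mul_derivative_eq_one_add_sq (by norm_num)
    eight_mul_derivative_favardSeries ?_ n
  rw [favardSeries, coeff_rescale, map_add]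
  simp [secSeries, tanSeries, eulerNumber]

theorem favard_recurrence (n : ℕ) (hn : 1 ≤ n) :
    favardK (n + 1) =
      (1 / (8 * (n + 1))) * ∑ k ∈ Finset.range (n + 1), favardK k * favardK (n - k) := by
  have h := coeff_succ_of_C_mul_derivative_eq_one_add_sq eight_mul_derivative_favardSeries n
  rw [if_neg (by omega), zero_add] at h
  simp only [favardK_eq_coeff]
  rw [← h]
  field_simp
end

section
/- For any absolutely continuous function x : [0,1] → ℝ with x' ∈ L^∞, x(0) = x(1), and ∫_0^1 x(t) dt = 0, one has max_{t∈[0,1]} |x(t)| ≤ (1/4)·ess sup_{t∈[0,1]} |x'(t)|, and the constant 1/4 = K_1 is best possible. -/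
/-! With `S = ess sup |x'|`, the function `x` is `S`-Lipschitz on `[0, T]`, and since `x 0 = x T` one
may also go from `s` to `t` around through the endpoints; so `|x t - x s| ≤ S · d(s, t)` with `d` the
distance on the circle `ℝ ⧸ Tℤ`. Mean zero gives `T · x t = ∫₀ᵀ (x t - x s) ds`, hence
`T · |x t| ≤ S ∫₀ᵀ d(s, t) ds = S T² / 4`. Equality holds for the triangle wave `|t - T/2| - T/4`
at `t = T/2`. -/

open MeasureTheory intervalIntegral
/-- `x` belongs to `AC^{n-1}([0,T])`, its (a.e.) `n`-th derivative is `g`, and all the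
derivatives of order `< n` satisfy the periodic boundary conditions `x⁽ⁱ⁾(0) = x⁽ⁱ⁾(T)`. -/
def PeriodicACSol (n : ℕ) (T : ℝ) (x g : ℝ → ℝ) : Prop :=
  ∃ D : ℕ → ℝ → ℝ,
    D 0 = x ∧ D n = g ∧
    ∀ i < n,
      IntervalIntegrable (D (i + 1)) volume 0 T ∧
      (∀ t ∈ Set.Icc (0 : ℝ) T, D i t = D i 0 + ∫ s in (0 : ℝ)..t, D (i + 1) s) ∧
      D i 0 = D i T

open Set

theorem integral_abs_symm {c : ℝ} (hc : 0 ≤ c) : ∫ u in -c..c, |u| = c ^ 2 := by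
  have hpos : ∫ u in (0 : ℝ)..c, |u| = c ^ 2 / 2 := by
    rw [integral_congr (g := fun u => u) fun u hu => abs_of_nonneg (uIcc_of_le hc ▸ hu).1,
      integral_id]
    ring
  have hneg : ∫ u in -c..0, |u| = ∫ u in (0 : ℝ)..c, |u| := by
    simpa using (integral_comp_neg (a := 0) (b := c) fun u => |u|).symm
  rw [← integral_add_adjacent_intervals (b := 0) (continuous_abs.intervalIntegrable _ _)
    (continuous_abs.intervalIntegrable _ _), hneg, hpos]
  ring

namespace AddCircle

variable {T : ℝ}

theorem min_abs_le_norm_coe (hT : 0 ≤ T) {u : ℝ} :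
    min |u| (T - |u|) ≤ ‖(u : AddCircle T)‖ := by
  rw [norm_eq]
  generalize round (T⁻¹ * u) = k
  rcases lt_trichotomy k 0 with hk | rfl | hk
  · have hk' : (k : ℝ) ≤ -1 := by exact_mod_cast Int.le_sub_one_iff.2 hk
    refine (min_le_right _ _).trans ?_
    nlinarith [le_abs_self (u - k * T), neg_abs_le u]
  · simp
  · have hk' : (1 : ℝ) ≤ k := by exact_mod_cast hk
    refine (min_le_right _ _).trans ?_
    nlinarith [neg_le_abs (u - k * T), le_abs_self u]

theorem integral_norm_coe_sub (hT : 0 < T) (t : ℝ) :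
    ∫ s in (0 : ℝ)..T, ‖((s - t : ℝ) : AddCircle T)‖ = T ^ 2 / 4 := by
  have hper : Function.Periodic (fun u : ℝ => ‖(u : AddCircle T)‖) T := fun u => by
    simp only [coe_add_period]
  rw [integral_comp_sub_right (fun u => ‖(u : AddCircle T)‖), zero_sub,
    show T - t = -t + T by ring, hper.intervalIntegral_add_eq (-t) (-(T / 2)),
    show -(T / 2) + T = T / 2 by ring,
    integral_congr (g := fun u => |u|) fun u hu => (norm_coe_eq_abs_iff T hT.ne').2 ?_,
    integral_abs_symm (by positivity)]
  · ring
  · rw [uIcc_of_le (by linarith), mem_Icc] at hu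
    rw [abs_of_pos hT]
    exact abs_le.2 hu

end AddCircle

section Lipschitz

variable {x : ℝ → ℝ} {S T : ℝ}

theorem abs_sub_le_mul_norm_coe_addCircle (hT : 0 < T)
    (hlip : ∀ a ∈ Icc 0 T, ∀ b ∈ Icc 0 T, |x b - x a| ≤ S * |b - a|) (hper : x 0 = x T)
    {s t : ℝ} (hs : s ∈ Icc 0 T) (ht : t ∈ Icc 0 T) :
    |x t - x s| ≤ S * ‖((s - t : ℝ) : AddCircle T)‖ := by
  have h0 : (0 : ℝ) ∈ Icc 0 T := ⟨le_rfl, hT.le⟩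
  have hT' : T ∈ Icc 0 T := ⟨hT.le, le_rfl⟩
  have hS : 0 ≤ S := by
    have := (abs_nonneg _).trans (hlip 0 h0 T hT')
    rw [sub_zero, abs_of_pos hT] at this
    exact nonneg_of_mul_nonneg_left this hT
  have direct : |x t - x s| ≤ S * |s - t| := abs_sub_comm s t ▸ hlip s hs t ht
  have around_le : ∀ a ∈ Icc 0 T, ∀ b ∈ Icc 0 T, a ≤ b → |x b - x a| ≤ S * (T - (b - a)) := by
    intro a ha b hb _
    calc |x b - x a| = |(x b - x T) + (x 0 - x a)| := by rw [hper]; ring_nf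
      _ ≤ |x T - x b| + |x a - x 0| := by
        simpa only [abs_sub_comm] using abs_add_le (x b - x T) (x 0 - x a)
      _ ≤ S * |T - b| + S * |a - 0| := add_le_add (hlip b hb T hT') (hlip 0 h0 a ha)
      _ = S * (T - (b - a)) := by
        rw [abs_of_nonneg (sub_nonneg.2 hb.2), sub_zero, abs_of_nonneg ha.1]
        ring
  have around : |x t - x s| ≤ S * (T - |s - t|) := by
    rcases le_total s t with hst | hst
    · rw [abs_sub_comm s, abs_of_nonneg (sub_nonneg.2 hst)]
      exact around_le s hs t ht hst
    · rw [abs_sub_comm, abs_of_nonneg (sub_nonneg.2 hst)]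
      exact around_le t ht s hs hst
  calc |x t - x s| ≤ min (S * |s - t|) (S * (T - |s - t|)) := le_min direct around
    _ = S * min |s - t| (T - |s - t|) := (mul_min_of_nonneg _ _ hS).symm
    _ ≤ S * ‖((s - t : ℝ) : AddCircle T)‖ :=
      mul_le_mul_of_nonneg_left (AddCircle.min_abs_le_norm_coe hT.le) hS

theorem abs_le_of_lipschitz_of_periodic_of_integral_eq_zero (hT : 0 < T)
    (hlip : ∀ a ∈ Icc 0 T, ∀ b ∈ Icc 0 T, |x b - x a| ≤ S * |b - a|) (hper : x 0 = x T)
    (hmean : ∫ s in (0 : ℝ)..T, x s = 0) {t : ℝ} (ht : t ∈ Icc 0 T) :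
    |x t| ≤ S * T / 4 := by
  have hcont : ContinuousOn x (Icc 0 T) :=
    (LipschitzOnWith.of_dist_le' fun a ha b hb => by
      simpa only [Real.dist_eq, abs_sub_comm] using hlip b hb a ha).continuousOn
  have hrepr : T * x t = ∫ s in (0 : ℝ)..T, (x t - x s) := by
    rw [integral_sub intervalIntegrable_const (hcont.intervalIntegrable_of_Icc hT.le), hmean,
      intervalIntegral.integral_const, smul_eq_mul, sub_zero, sub_zero]
  have hkernel : Continuous fun s : ℝ => S * ‖((s - t : ℝ) : AddCircle T)‖ := by fun_prop
  have : T * |x t| ≤ T * (S * T / 4) :=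
    calc T * |x t| = |∫ s in (0 : ℝ)..T, (x t - x s)| := by rw [← hrepr, abs_mul, abs_of_pos hT]
      _ ≤ ∫ s in (0 : ℝ)..T, |x t - x s| := abs_integral_le_integral_abs hT.le
      _ ≤ ∫ s in (0 : ℝ)..T, S * ‖((s - t : ℝ) : AddCircle T)‖ :=
        integral_mono_on hT.le
          ((continuousOn_const.sub hcont).abs.intervalIntegrable_of_Icc hT.le)
          (hkernel.intervalIntegrable _ _)
          fun s hs => abs_sub_le_mul_norm_coe_addCircle hT hlip hper hs ht
      _ = T * (S * T / 4) := by
        rw [intervalIntegral.integral_const_mul, AddCircle.integral_norm_coe_sub hT]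
        ring
  exact le_of_mul_le_mul_left this hT

end Lipschitz

theorem periodicACSol_one_iff {T : ℝ} {x g : ℝ → ℝ} :
    PeriodicACSol 1 T x g ↔ IntervalIntegrable g volume 0 T ∧
      (∀ t ∈ Icc 0 T, x t = x 0 + ∫ s in (0 : ℝ)..t, g s) ∧ x 0 = x T := by
  constructor
  · rintro ⟨D, rfl, rfl, hD⟩
    exact hD 0 one_pos
  · intro h
    refine ⟨fun i => if i = 0 then x else g, rfl, rfl, fun i hi => ?_⟩
    obtain rfl : i = 0 := Nat.lt_one_iff.1 hi
    exact h

theorem abs_sub_le_of_eq_primitive {T S : ℝ} {x g : ℝ → ℝ} (hg : IntervalIntegrable g volume 0 T)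
    (hx : ∀ t ∈ Icc 0 T, x t = x 0 + ∫ s in (0 : ℝ)..t, g s)
    (hgS : ∀ᵐ s ∂(volume.restrict (Icc 0 T)), |g s| ≤ S) :
    ∀ a ∈ Icc 0 T, ∀ b ∈ Icc 0 T, |x b - x a| ≤ S * |b - a| := by
  intro a ha b hb
  have hsub : ∀ c ∈ Icc 0 T, uIcc 0 c ⊆ uIcc 0 T := fun c hc =>
    uIcc_subset_uIcc_left (uIcc_of_le (hc.1.trans hc.2) ▸ hc)
  calc |x b - x a| = ‖∫ s in a..b, g s‖ := by
        rw [hx a ha, hx b hb, add_sub_add_left_eq_sub, Real.norm_eq_abs,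
          integral_interval_sub_left (hg.mono_set (hsub b hb)) (hg.mono_set (hsub a ha))]
    _ ≤ S * |b - a| := by
        refine norm_integral_le_of_norm_le_const_ae ?_
        filter_upwards [(ae_restrict_iff' measurableSet_Icc).1 hgS] with s hs hsab
        exact hs (uIcc_subset_Icc ha hb (uIoc_subset_uIcc hsab))

theorem PeriodicACSol.abs_le_essSup {T : ℝ} {x g : ℝ → ℝ} (hT : 0 < T) (h : PeriodicACSol 1 T x g)
    (hbdd : ∃ M : ℝ, ∀ᵐ t ∂(volume.restrict (Icc 0 T)), |g t| ≤ M)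
    (hmean : ∫ t in (0 : ℝ)..T, x t = 0) {t : ℝ} (ht : t ∈ Icc 0 T) :
    |x t| ≤ T / 4 * essSup (fun t => |g t|) (volume.restrict (Icc 0 T)) := by
  obtain ⟨hg, hx, hper⟩ := periodicACSol_one_iff.1 h
  obtain ⟨M, hM⟩ := hbdd
  have hS := ae_le_essSup (Filter.isBoundedUnder_of_eventually_le hM)
  have := abs_le_of_lipschitz_of_periodic_of_integral_eq_zero hT
    (abs_sub_le_of_eq_primitive hg hx hS) hper hmean ht
  linarith

noncomputable def triangleWave (T t : ℝ) : ℝ := |t - T / 2| - T / 4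

-- The right derivative of `triangleWave T` everywhere, including at the kink `T / 2`.
noncomputable def triangleWaveSlope (T s : ℝ) : ℝ := if s < T / 2 then -1 else 1

theorem hasDerivWithinAt_triangleWave_Ioi (T s : ℝ) :
    HasDerivWithinAt (triangleWave T) (triangleWaveSlope T s) (Ioi s) s := by
  have habs : HasDerivWithinAt (fun t => |t - T / 2|) (triangleWaveSlope T s) (Ioi s) s := by
    unfold triangleWaveSlope
    split_ifs with h
    · have := (hasDerivAt_abs_neg (sub_neg.2 h)).comp s ((hasDerivAt_id s).sub_const (T / 2))
      rw [mul_one] at this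
      exact this.hasDerivWithinAt
    · refine ((hasDerivWithinAt_id s _).sub_const (T / 2)).congr (fun t ht => ?_) ?_
      · exact abs_of_nonneg (by linarith [mem_Ioi.1 ht])
      · exact abs_of_nonneg (by linarith)
  exact habs.sub_const (T / 4)

theorem continuous_triangleWave (T : ℝ) : Continuous (triangleWave T) := by
  unfold triangleWave
  fun_prop

theorem abs_triangleWaveSlope (T s : ℝ) : |triangleWaveSlope T s| = 1 := by
  unfold triangleWaveSlope
  split_ifs <;> simp

theorem intervalIntegrable_triangleWaveSlope (T a b : ℝ) :
    IntervalIntegrable (triangleWaveSlope T) volume a b := by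
  refine Monotone.intervalIntegrable fun s s' hss' => ?_
  unfold triangleWaveSlope
  split_ifs <;> linarith

theorem integral_triangleWaveSlope (T t : ℝ) :
    ∫ s in (0 : ℝ)..t, triangleWaveSlope T s = triangleWave T t - triangleWave T 0 :=
  integral_eq_sub_of_hasDeriv_right (continuous_triangleWave T).continuousOn
    (fun s _ => hasDerivWithinAt_triangleWave_Ioi T s) (intervalIntegrable_triangleWaveSlope T 0 t)

theorem periodicACSol_triangleWave (T : ℝ) :
    PeriodicACSol 1 T (triangleWave T) (triangleWaveSlope T) := by
  refine periodicACSol_one_iff.2 ⟨intervalIntegrable_triangleWaveSlope T 0 T,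
    fun t _ => by rw [integral_triangleWaveSlope]; ring, ?_⟩
  simp only [triangleWave]
  rw [show T - T / 2 = -(0 - T / 2) by ring, abs_neg]

theorem integral_triangleWave {T : ℝ} (hT : 0 ≤ T) : ∫ t in (0 : ℝ)..T, triangleWave T t = 0 := by
  have hcont : Continuous fun t : ℝ => |t - T / 2| := by fun_prop
  simp only [triangleWave]
  rw [integral_sub (hcont.intervalIntegrable 0 T) intervalIntegrable_const,
    integral_comp_sub_right (fun u => |u|), zero_sub, show T - T / 2 = T / 2 by ring,
    integral_abs_symm (by positivity), intervalIntegral.integral_const, smul_eq_mul]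
  ring

theorem essSup_abs_triangleWaveSlope {T : ℝ} (hT : 0 < T) :
    essSup (fun s => |triangleWaveSlope T s|) (volume.restrict (Icc 0 T)) = 1 := by
  simp only [abs_triangleWaveSlope]
  exact essSup_const _ (by simp [Measure.restrict_eq_zero, hT])

/-- The Favard inequality for `n = 1` on `[0,1]`, with the sharp constant `K₁ = 1/4`:
any absolutely continuous `1`-periodic function with mean zero satisfies
`max |x| ≤ (1/4) · ess sup |x'|`, and `1/4` cannot be replaced by any smaller constant. -/
theorem favard_inequality_order_one :
    (∀ x g : ℝ → ℝ, PeriodicACSol 1 1 x g →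
      (∃ M : ℝ, ∀ᵐ t ∂(volume.restrict (Set.Icc (0 : ℝ) 1)), |g t| ≤ M) →
      (∫ t in (0 : ℝ)..1, x t) = 0 →
      ∀ t ∈ Set.Icc (0 : ℝ) 1,
        |x t| ≤ (1 / 4) * essSup (fun t => |g t|) (volume.restrict (Set.Icc (0 : ℝ) 1))) ∧
    ∀ c : ℝ, c < 1 / 4 →
      ∃ x g : ℝ → ℝ, PeriodicACSol 1 1 x g ∧
        (∃ M : ℝ, ∀ᵐ t ∂(volume.restrict (Set.Icc (0 : ℝ) 1)), |g t| ≤ M) ∧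
        (∫ t in (0 : ℝ)..1, x t) = 0 ∧
        ∃ t ∈ Set.Icc (0 : ℝ) 1,
          c * essSup (fun t => |g t|) (volume.restrict (Set.Icc (0 : ℝ) 1)) < |x t| := by
  refine ⟨fun x g h hbdd hmean t ht => h.abs_le_essSup one_pos hbdd hmean ht, fun c hc => ?_⟩
  refine ⟨triangleWave 1, triangleWaveSlope 1, periodicACSol_triangleWave 1,
    ⟨1, ae_of_all _ fun s => (abs_triangleWaveSlope 1 s).le⟩, integral_triangleWave zero_le_one,
    1 / 2, by norm_num, ?_⟩
  rw [essSup_abs_triangleWaveSlope one_pos]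
  norm_num [triangleWave]
  linarith
end

section
/- For any function x : [0,1] → ℝ with absolutely continuous derivative, x'' ∈ L^∞, x(0)=x(1), x'(0)=x'(1), and ∫_0^1 x(t) dt = 0, one has max_{t∈[0,1]} |x(t)| ≤ (1/32)·ess sup_{t∈[0,1]} |x''(t)|. -/
open MeasureTheory intervalIntegral
/-!
Let `Φ(v) = (v - 1/4)(v - 3/4)/2` (`favardKernel`), so `Φ'' = 1` and `Φ(0) = Φ(1)`. Integrating
`Φ(t - u) x''(u)` by parts twice over `[0, t]`, and `Φ(t + 1 - u) x''(u)` over `[t, 1]`, the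
boundary terms cancel by periodicity and the jump of `Φ'` across `u = t` produces `x(t)`:
`x(t) - ∫₀¹ x = -∫₀¹ Φ((t - u) mod 1) x''(u) du`. Hence `|x(t)| ≤ ‖x''‖_∞ ∫₀¹ |Φ| = ‖x''‖_∞ / 32`.
-/

open Set

theorem integral_mul_eq_sub_integral_deriv_mul_primitive {k k' f F : ℝ → ℝ} {a b c d : ℝ}
    (hca : c ≤ a) (hab : a ≤ b) (hbd : b ≤ d) (hk : ∀ u, HasDerivAt k (k' u) u)
    (hk' : Continuous k') (hf : IntervalIntegrable f volume c d)
    (hF : ∀ u ∈ Icc c d, F u = F c + ∫ v in c..u, f v) :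
    ∫ u in a..b, k u * f u = k b * F b - k a * F a - ∫ u in a..b, k' u * F u := by
  set G : ℝ → ℝ := fun u ↦ F c + ∫ v in c..u, f v
  have hsub : uIcc a b ⊆ uIcc c d := by
    rw [uIcc_of_le hab, uIcc_of_le (hca.trans (hab.trans hbd))]
    exact Icc_subset_Icc hca hbd
  have hGF : EqOn G F (uIcc a b) := fun u hu ↦
    (hF u (uIcc_of_le (hca.trans (hab.trans hbd)) ▸ hsub hu)).symm
  have hkAC : AbsolutelyContinuousOnInterval k a b := by
    have hderiv : deriv k = k' := funext fun u ↦ (hk u).deriv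
    exact (contDiff_one_iff_deriv.2 ⟨fun u ↦ (hk u).differentiableAt, hderiv ▸ hk'⟩).contDiffOn
      |>.absolutelyContinuousOnInterval
  have hGAC : AbsolutelyContinuousOnInterval G a b :=
    ((contDiffOn_const (c := F c)).absolutelyContinuousOnInterval.add
      (hf.absolutelyContinuousOnInterval_intervalIntegral left_mem_uIcc)).mono hsub
  have hderivG : ∀ᵐ u, u ∈ uIcc a b → deriv G u = f u := by
    filter_upwards [hf.ae_hasDerivAt_integral] with u hu hmem
    exact ((hu (hsub hmem) c left_mem_uIcc).const_add (F c)).deriv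
  calc ∫ u in a..b, k u * f u = ∫ u in a..b, k u * deriv G u := by
        refine integral_congr_ae ?_
        filter_upwards [hderivG] with u hu hmem
        rw [hu (uIoc_subset_uIcc hmem)]
    _ = k b * G b - k a * G a - ∫ u in a..b, deriv k u * G u :=
        hkAC.integral_mul_deriv_eq_deriv_mul hGAC
    _ = k b * F b - k a * F a - ∫ u in a..b, k' u * F u := by
        rw [hGF right_mem_uIcc, hGF left_mem_uIcc,
          integral_congr fun u hu ↦ by rw [(hk u).deriv, hGF hu]]

theorem integral_mul_eq_by_parts_twice {k k' k'' x y g : ℝ → ℝ} {a b c d : ℝ}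
    (hca : c ≤ a) (hab : a ≤ b) (hbd : b ≤ d) (hk : ∀ u, HasDerivAt k (k' u) u)
    (hk' : ∀ u, HasDerivAt k' (k'' u) u) (hk'' : Continuous k'')
    (hy : IntervalIntegrable y volume c d) (hg : IntervalIntegrable g volume c d)
    (hxy : ∀ u ∈ Icc c d, x u = x c + ∫ v in c..u, y v)
    (hyg : ∀ u ∈ Icc c d, y u = y c + ∫ v in c..u, g v) :
    ∫ u in a..b, k u * g u =
      k b * y b - k a * y a - (k' b * x b - k' a * x a - ∫ u in a..b, k'' u * x u) := by
  have hk'c : Continuous k' := continuous_iff_continuousAt.2 fun u ↦ (hk' u).continuousAt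
  rw [integral_mul_eq_sub_integral_deriv_mul_primitive hca hab hbd hk hk'c hg hyg,
    integral_mul_eq_sub_integral_deriv_mul_primitive hca hab hbd hk' hk'' hy hxy]

theorem abs_integral_mul_le_mul_integral_abs {k g : ℝ → ℝ} {a b M : ℝ} (hab : a ≤ b)
    (hk : Continuous k) (hg : ∀ᵐ u, u ∈ Ioc a b → |g u| ≤ M) :
    |∫ u in a..b, k u * g u| ≤ M * ∫ u in a..b, |k u| := by
  rw [← intervalIntegral.integral_const_mul, ← Real.norm_eq_abs]
  refine norm_integral_le_of_norm_le hab ?_ ((hk.abs.intervalIntegrable a b).const_mul M)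
  filter_upwards [hg] with u hu hmem
  rw [Real.norm_eq_abs, abs_mul, mul_comm]
  exact mul_le_mul_of_nonneg_right (hu hmem) (abs_nonneg _)

-- Any constant term would do in the representation; `3/32` puts the zeros at `1/4` and `3/4`,
-- which minimises `∫₀¹ |Φ|`.
noncomputable def favardKernel (v : ℝ) : ℝ := (v - 1 / 4) * (v - 3 / 4) / 2

theorem continuous_favardKernel : Continuous favardKernel := by
  unfold favardKernel; fun_prop

theorem hasDerivAt_favardKernel_sub (s u : ℝ) :
    HasDerivAt (fun u ↦ favardKernel (s - u)) (u - s + 1 / 2) u := by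
  have h := ((hasDerivAt_id' u).const_sub s).sub_const (1 / 4) |>.mul
    (((hasDerivAt_id' u).const_sub s).sub_const (3 / 4)) |>.div_const 2
  exact h.congr_deriv (by ring)

theorem integral_favardKernel (a b : ℝ) :
    ∫ v in a..b, favardKernel v =
      (b ^ 3 / 6 - b ^ 2 / 4 + 3 * b / 32) - (a ^ 3 / 6 - a ^ 2 / 4 + 3 * a / 32) := by
  refine integral_eq_sub_of_hasDerivAt (f := fun v ↦ v ^ 3 / 6 - v ^ 2 / 4 + 3 * v / 32)
    (fun v _ ↦ ?_) (continuous_favardKernel.intervalIntegrable a b)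
  have h := (((hasDerivAt_pow 3 v).div_const 6).sub ((hasDerivAt_pow 2 v).div_const 4)).add
    (((hasDerivAt_id v).const_mul 3).div_const 32)
  exact h.congr_deriv (by
    simp only [Nat.cast_ofNat, Nat.add_one_sub_one, pow_one, mul_one, favardKernel]; ring)

theorem integral_abs_favardKernel : ∫ v in (0 : ℝ)..1, |favardKernel v| = 1 / 32 := by
  have hint (a b : ℝ) : IntervalIntegrable (fun v ↦ |favardKernel v|) volume a b :=
    continuous_favardKernel.abs.intervalIntegrable a b
  rw [← integral_add_adjacent_intervals (hint 0 (1 / 4)) (hint _ 1),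
    ← integral_add_adjacent_intervals (hint (1 / 4) (3 / 4)) (hint _ 1),
    integral_congr (a := 0) (b := 1 / 4) (g := favardKernel) ?nonneg₁,
    integral_congr (a := 1 / 4) (b := 3 / 4) (g := fun v ↦ -favardKernel v) ?nonpos,
    integral_congr (a := 3 / 4) (b := 1) (g := favardKernel) ?nonneg₂, intervalIntegral.integral_neg]
  · simp only [integral_favardKernel]; norm_num
  case nonneg₁ | nonneg₂ | nonpos =>
    intro v hv
    rw [uIcc_of_le (by norm_num)] at hv
    obtain ⟨h₁, h₂⟩ := hv
    simp only [favardKernel]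
    first
    | exact abs_of_nonneg (by nlinarith)
    | exact abs_of_nonpos (by nlinarith)

theorem integral_abs_favardKernel_split (t : ℝ) :
    (∫ u in (0 : ℝ)..t, |favardKernel (t - u)|) + ∫ u in t..1, |favardKernel (t + 1 - u)| =
      1 / 32 := by
  rw [integral_comp_sub_left (fun v ↦ |favardKernel v|),
    integral_comp_sub_left (fun v ↦ |favardKernel v|)]
  simp only [sub_self, sub_zero, add_sub_cancel_right, add_sub_cancel_left]
  rw [integral_add_adjacent_intervals (continuous_favardKernel.abs.intervalIntegrable _ _)
    (continuous_favardKernel.abs.intervalIntegrable _ _), integral_abs_favardKernel]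

theorem PeriodicACSol.sub_integral_eq_neg_integral_favardKernel {x g : ℝ → ℝ}
    (hsol : PeriodicACSol 2 1 x g) {t : ℝ} (ht : t ∈ Icc (0 : ℝ) 1) :
    x t - ∫ u in (0 : ℝ)..1, x u =
      -((∫ u in (0 : ℝ)..t, favardKernel (t - u) * g u) +
        ∫ u in t..1, favardKernel (t + 1 - u) * g u) := by
  obtain ⟨D, rfl, rfl, hD⟩ := hsol
  obtain ⟨hy, hxy, hx01⟩ := hD 0 (by norm_num)
  obtain ⟨hg, hyg, hy01⟩ := hD 1 (by norm_num)
  rw [zero_add] at hy hxy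
  have hxc : ContinuousOn (D 0) (Icc 0 1) := by
    have := continuousOn_primitive_interval' hy (left_mem_uIcc (b := (1 : ℝ)))
    rw [uIcc_of_le zero_le_one] at this
    exact (continuousOn_const.add this).congr hxy
  have hxint (a b : ℝ) (ha : 0 ≤ a) (hab : a ≤ b) (hb : b ≤ 1) :
      IntervalIntegrable (D 0) volume a b :=
    (hxc.mono (Icc_subset_Icc ha hb)).intervalIntegrable_of_Icc hab
  have hk'' : Continuous fun _ : ℝ ↦ (1 : ℝ) := continuous_const
  have hk' (s u : ℝ) : HasDerivAt (fun u ↦ u - s + 1 / 2) 1 u :=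
    ((hasDerivAt_id u).sub_const s).add_const _
  rw [integral_mul_eq_by_parts_twice le_rfl ht.1 ht.2
      (hasDerivAt_favardKernel_sub t) (hk' t) hk'' hy hg hxy hyg,
    integral_mul_eq_by_parts_twice ht.1 ht.2 le_rfl
      (hasDerivAt_favardKernel_sub (t + 1)) (hk' (t + 1)) hk'' hy hg hxy hyg,
    ← integral_add_adjacent_intervals (hxint 0 t le_rfl ht.1 ht.2) (hxint t 1 ht.1 ht.2 le_rfl)]
  simp only [one_mul, favardKernel]
  linear_combination (1 / 2 - t) * hx01 - (t - 1 / 4) * (t - 3 / 4) / 2 * hy01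

/-- The Favard inequality for `n = 2` on `[0,1]` with the Favard constant `K₂ = 1/32`. -/
theorem favard_inequality_order_two (x g : ℝ → ℝ)
    (hsol : PeriodicACSol 2 1 x g)
    (hbd : ∃ M : ℝ, ∀ᵐ t ∂(volume.restrict (Set.Icc (0 : ℝ) 1)), |g t| ≤ M)
    (hmean : (∫ t in (0 : ℝ)..1, x t) = 0) :
    ∀ t ∈ Set.Icc (0 : ℝ) 1,
      |x t| ≤ (1 / 32) * essSup (fun t => |g t|) (volume.restrict (Set.Icc (0 : ℝ) 1)) := by
  intro t ht
  set M := essSup (fun t ↦ |g t|) (volume.restrict (Icc (0 : ℝ) 1))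
  obtain ⟨M₀, hM₀⟩ := hbd
  have hM : ∀ᵐ u, u ∈ Icc (0 : ℝ) 1 → |g u| ≤ M :=
    (ae_restrict_iff' measurableSet_Icc).1 (ae_le_essSup ⟨M₀, hM₀⟩)
  have hM_on {a b : ℝ} (ha : 0 ≤ a) (hb : b ≤ 1) : ∀ᵐ u, u ∈ Ioc a b → |g u| ≤ M := by
    filter_upwards [hM] with u hu hmem
    exact hu ⟨ha.trans hmem.1.le, hmem.2.trans hb⟩
  have hrep := hsol.sub_integral_eq_neg_integral_favardKernel ht
  rw [hmean, sub_zero] at hrep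
  have hk (s : ℝ) : Continuous fun u ↦ favardKernel (s - u) := by
    unfold favardKernel; fun_prop
  calc |x t| ≤ |∫ u in (0 : ℝ)..t, favardKernel (t - u) * g u| +
        |∫ u in t..1, favardKernel (t + 1 - u) * g u| := by
        rw [hrep, abs_neg]; exact abs_add_le _ _
    _ ≤ M * (∫ u in (0 : ℝ)..t, |favardKernel (t - u)|) +
        M * ∫ u in t..1, |favardKernel (t + 1 - u)| :=
        add_le_add (abs_integral_mul_le_mul_integral_abs ht.1 (hk t) (hM_on le_rfl ht.2))
          (abs_integral_mul_le_mul_integral_abs ht.2 (hk (t + 1)) (hM_on ht.1 le_rfl))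
    _ = 1 / 32 * M := by
        rw [← mul_add, integral_abs_favardKernel_split t, mul_comm]
end

section
/- Let T > 0 and L > 0 with L < 1/(K_1 T), where K_1 = 1/4, i.e. L·T < 4. Then for every measurable τ : [0,T] → [0,T] and every constant C, the first-order periodic problem x'(t) = L·x(τ(t)) + C on [0,T] with x(0) = x(T) has a unique absolutely continuous solution. -/
open MeasureTheory intervalIntegral
/-- `x` belongs to `AC^{n-1}([0,T])`, its (a.e.) `n`-th derivative is `g`, and all the
derivatives of order `< n` satisfy the periodic boundary conditions `x⁽ⁱ⁾(0) = x⁽ⁱ⁾(T)`. -/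
lemma favard_core (L T M m d : ℝ) (hL : 0 < L) (hT : 0 < T) (hLT : L * T < 4)
    (hd0 : 0 ≤ d) (hdT : d ≤ T) (hM : 0 < M) (hm : 0 ≤ m)
    (h1 : M + m ≤ L * d * m) (h2 : M + m ≤ L * (T - d) * M) : False := by
  rcases eq_or_lt_of_le hm with hm0 | hm
  · subst hm0; nlinarith
  · have hMm : (0:ℝ) < M + m := by linarith
    have hp : (M + m) * (M + m) ≤ (L * d * m) * (L * (T - d) * M) :=
      mul_le_mul h1 h2 hMm.le (le_trans hMm.le h1)
    have h16 : (L * T) ^ 2 < 16 := by nlinarith [mul_pos hL hT]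
    have hdd : L ^ 2 * (d * (T - d)) ≤ (L * T) ^ 2 / 4 := by
      nlinarith [sq_nonneg (2 * d - T), sq_nonneg L]
    have hq : (M + m) ^ 2 ≤ (L * T) ^ 2 / 4 * (M * m) := by
      nlinarith [mul_le_mul_of_nonneg_right hdd (le_of_lt (mul_pos hM hm))]
    nlinarith [sq_nonneg (M - m), mul_pos hM hm, h16]

lemma favard_aux (L T M m d : ℝ) (hL : 0 < L) (hT : 0 < T) (hLT : L * T < 4)
    (hd0 : 0 ≤ d) (hdT : d ≤ T) (hM : 0 ≤ M) (hm : 0 ≤ m) (hor : 0 < M ∨ 0 < m)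
    (h1 : M + m ≤ L * d * m) (h2 : M + m ≤ L * (T - d) * M) : False := by
  rcases hor with h | h
  · exact favard_core L T M m d hL hT hLT hd0 hdT h hm h1 h2
  · exact favard_core L T m M (T - d) hL hT hLT (by linarith) (by linarith) h hM
      (by linarith) (by rw [show T - (T - d) = d by ring]; linarith)

/-- If `L·T < 4 = 1/(K₁·T)·T⁻¹`-wise, then for every measurable `τ : [0,T] → [0,T]` and
every constant `C` the periodic problem `x' = L·x(τ(·)) + C`, `x(0) = x(T)`, is uniquely
solvable (uniqueness meaning any two solutions coincide on `[0,T]`). -/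
theorem first_order_periodic_unique_solvability
    (T L : ℝ) (hT : 0 < T) (hL : 0 < L) (hLT : L * T < 4)
    (τ : ℝ → ℝ) (hτ : Measurable τ) (hτmap : Set.MapsTo τ (Set.Icc 0 T) (Set.Icc 0 T))
    (C : ℝ) :
    (∃ x g : ℝ → ℝ, PeriodicACSol 1 T x g ∧
      g =ᵐ[volume.restrict (Set.Icc (0 : ℝ) T)] fun t => L * x (τ t) + C) ∧
    ∀ x₁ g₁ x₂ g₂ : ℝ → ℝ,
      PeriodicACSol 1 T x₁ g₁ →
      g₁ =ᵐ[volume.restrict (Set.Icc (0 : ℝ) T)] (fun t => L * x₁ (τ t) + C) →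
      PeriodicACSol 1 T x₂ g₂ →
      g₂ =ᵐ[volume.restrict (Set.Icc (0 : ℝ) T)] (fun t => L * x₂ (τ t) + C) →
      ∀ t ∈ Set.Icc (0 : ℝ) T, x₁ t = x₂ t := by
  constructor
  · -- existence: the constant solution x ≡ -C/L
    refine ⟨fun _ => -C / L, fun _ => 0,
      ⟨fun i => if i = 0 then (fun _ => -C / L) else (fun _ => 0), rfl, by simp, ?_⟩, ?_⟩
    · intro i hi
      interval_cases i
      refine ⟨by simpa using (intervalIntegrable_const : IntervalIntegrable (fun _ => (0:ℝ)) volume 0 T), ?_, by simp⟩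
      intro t ht
      simp
    · filter_upwards with t
      field_simp
      ring
  · -- uniqueness
    intro x₁ g₁ x₂ g₂ hP1 hae1 hP2 hae2 t ht
    obtain ⟨D₁, hD₁0, hD₁1, hD₁⟩ := hP1
    obtain ⟨D₂, hD₂0, hD₂1, hD₂⟩ := hP2
    obtain ⟨I₁, hrep₁, hbc₁⟩ := hD₁ 0 (by norm_num)
    obtain ⟨I₂, hrep₂, hbc₂⟩ := hD₂ 0 (by norm_num)
    rw [hD₁1] at I₁
    rw [hD₂1] at I₂
    simp only [hD₁0, hD₁1] at hrep₁ hbc₁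
    simp only [hD₂0, hD₂1] at hrep₂ hbc₂
    set c : ℝ := x₁ 0 - x₂ 0 with hc
    set f : ℝ → ℝ := fun u => g₁ u - g₂ u with hf
    have hInt : IntervalIntegrable f volume 0 T := I₁.sub I₂
    set Y : ℝ → ℝ := fun u => c + ∫ s in (0:ℝ)..u, f s with hY
    have hsub : ∀ u ∈ Set.Icc (0:ℝ) T, Set.uIcc (0:ℝ) u ⊆ Set.uIcc (0:ℝ) T := by
      intro u hu
      exact Set.uIcc_subset_uIcc Set.left_mem_uIcc (by rw [Set.uIcc_of_le hT.le]; exact hu)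
    have hsub2 : ∀ s u, s ∈ Set.Icc (0:ℝ) T → u ∈ Set.Icc (0:ℝ) T →
        Set.uIcc s u ⊆ Set.uIcc (0:ℝ) T := by
      intro s u hs hu
      exact Set.uIcc_subset_uIcc (by rw [Set.uIcc_of_le hT.le]; exact hs)
        (by rw [Set.uIcc_of_le hT.le]; exact hu)
    have hi : ∀ s u, s ∈ Set.Icc (0:ℝ) T → u ∈ Set.Icc (0:ℝ) T →
        IntervalIntegrable f volume s u := fun s u hs hu => hInt.mono_set (hsub2 s u hs hu)
    have hYx : ∀ u ∈ Set.Icc (0:ℝ) T, x₁ u - x₂ u = Y u := by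
      intro u hu
      rw [hrep₁ u hu, hrep₂ u hu]
      have h' : (∫ s in (0:ℝ)..u, f s) = (∫ s in (0:ℝ)..u, g₁ s) - ∫ s in (0:ℝ)..u, g₂ s :=
        integral_sub (I₁.mono_set (hsub u hu)) (I₂.mono_set (hsub u hu))
      rw [show Y u = c + ∫ s in (0:ℝ)..u, f s from rfl, h', hc]; ring
    have hYcont : ContinuousOn Y (Set.Icc 0 T) := by
      have hio : IntegrableOn f (Set.uIcc 0 T) volume := by
        rw [Set.uIcc_of_le hT.le]
        exact (intervalIntegrable_iff_integrableOn_Icc_of_le hT.le).mp hInt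
      have := intervalIntegral.continuousOn_primitive_interval hio
      rw [Set.uIcc_of_le hT.le] at this
      exact continuousOn_const.add this
    have haeY : ∀ᵐ u ∂(volume.restrict (Set.Icc (0:ℝ) T)), f u = L * Y (τ u) := by
      filter_upwards [hae1, hae2, ae_restrict_mem measurableSet_Icc] with u h1 h2 hu
      have hYt := hYx (τ u) (hτmap hu)
      show g₁ u - g₂ u = L * Y (τ u)
      rw [h1, h2, ← hYt]; ring
    obtain ⟨a, ha, hamax⟩ := isCompact_Icc.exists_isMaxOn (Set.nonempty_Icc.mpr hT.le) hYcont
    obtain ⟨b, hb, hbmin⟩ := isCompact_Icc.exists_isMinOn (Set.nonempty_Icc.mpr hT.le) hYcont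
    have hmax := isMaxOn_iff.mp hamax
    have hmin := isMinOn_iff.mp hbmin
    have h0mem : (0:ℝ) ∈ Set.Icc (0:ℝ) T := Set.left_mem_Icc.mpr hT.le
    have hTmem : T ∈ Set.Icc (0:ℝ) T := Set.right_mem_Icc.mpr hT.le
    -- upper and lower bounds for integrals of f
    have key_ub : ∀ s u, s ∈ Set.Icc (0:ℝ) T → u ∈ Set.Icc (0:ℝ) T → s ≤ u →
        (∫ v in s..u, f v) ≤ L * Y a * (u - s) := by
      intro s u hs hu hsu
      have hss : Set.Icc s u ⊆ Set.Icc (0:ℝ) T := Set.Icc_subset_Icc hs.1 hu.2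
      have hbd : f ≤ᵐ[volume.restrict (Set.Icc s u)] fun _ => L * Y a := by
        filter_upwards [ae_mono (Measure.restrict_mono hss le_rfl) haeY,
          ae_restrict_mem measurableSet_Icc] with v hv hv2
        rw [hv]
        exact mul_le_mul_of_nonneg_left (hmax _ (hτmap (hss hv2))) hL.le
      have := intervalIntegral.integral_mono_ae_restrict hsu (hi s u hs hu)
        intervalIntegrable_const hbd
      rw [intervalIntegral.integral_const, smul_eq_mul] at this
      linarith
    have key_lb : ∀ s u, s ∈ Set.Icc (0:ℝ) T → u ∈ Set.Icc (0:ℝ) T → s ≤ u →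
        L * Y b * (u - s) ≤ ∫ v in s..u, f v := by
      intro s u hs hu hsu
      have hss : Set.Icc s u ⊆ Set.Icc (0:ℝ) T := Set.Icc_subset_Icc hs.1 hu.2
      have hbd : (fun _ => L * Y b) ≤ᵐ[volume.restrict (Set.Icc s u)] f := by
        filter_upwards [ae_mono (Measure.restrict_mono hss le_rfl) haeY,
          ae_restrict_mem measurableSet_Icc] with v hv hv2
        rw [hv]
        exact mul_le_mul_of_nonneg_left (hmin _ (hτmap (hss hv2))) hL.le
      have := intervalIntegral.integral_mono_ae_restrict hsu intervalIntegrable_const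
        (hi s u hs hu) hbd
      rw [intervalIntegral.integral_const, smul_eq_mul] at this
      linarith
    -- ∫₀ᵀ f = 0
    have hint0T : (∫ v in (0:ℝ)..T, f v) = 0 := by
      have hT' : Y T = x₁ T - x₂ T := (hYx T hTmem).symm
      have : Y T = c := by rw [hT', ← hbc₁, ← hbc₂]
      have h0 : Y T = c + ∫ v in (0:ℝ)..T, f v := rfl
      linarith [h0 ▸ this]
    have hM0 : 0 ≤ Y a := by
      have := key_ub 0 T h0mem hTmem hT.le
      rw [hint0T] at this
      nlinarith [mul_pos hL hT]
    have hm0 : Y b ≤ 0 := by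
      have := key_lb 0 T h0mem hTmem hT.le
      rw [hint0T] at this
      nlinarith [mul_pos hL hT]
    -- difference of Y values as interval integrals
    have hYdiff : ∀ s u, s ∈ Set.Icc (0:ℝ) T → u ∈ Set.Icc (0:ℝ) T →
        Y u - Y s = ∫ v in s..u, f v := by
      intro s u hs hu
      have : (∫ v in (0:ℝ)..u, f v) - (∫ v in (0:ℝ)..s, f v) = ∫ v in s..u, f v :=
        intervalIntegral.integral_interval_sub_left (hi 0 u h0mem hu) (hi 0 s h0mem hs)
      rw [hY]; simp only []; linarith [this]
    -- the two key inequalities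
    have hkey : ∃ d, 0 ≤ d ∧ d ≤ T ∧ Y a + -Y b ≤ L * d * (-Y b) ∧
        Y a + -Y b ≤ L * (T - d) * (Y a) := by
      rcases le_total a b with hab | hba
      · refine ⟨b - a, by linarith, by linarith [ha.1, hb.2], ?_, ?_⟩
        · have h1' := key_lb a b ha hb hab
          have h2' := hYdiff a b ha hb
          nlinarith
        · have h2a := key_ub 0 a h0mem ha ha.1
          have h2b := key_ub b T hb hTmem hb.2
          have hsplit : (∫ v in (0:ℝ)..a, f v) + (∫ v in a..b, f v) + (∫ v in b..T, f v)
              = 0 := by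
            rw [intervalIntegral.integral_add_adjacent_intervals (hi 0 a h0mem ha)
              (hi a b ha hb), intervalIntegral.integral_add_adjacent_intervals
              (hi 0 b h0mem hb) (hi b T hb hTmem)]
            exact hint0T
          have h2' := hYdiff a b ha hb
          nlinarith
      · refine ⟨T - (a - b), by linarith [ha.2, hb.1], by linarith, ?_, ?_⟩
        · have h1a := key_lb 0 b h0mem hb hb.1
          have h1b := key_lb a T ha hTmem ha.2
          have hsplit : (∫ v in (0:ℝ)..b, f v) + (∫ v in b..a, f v) + (∫ v in a..T, f v)
              = 0 := by
            rw [intervalIntegral.integral_add_adjacent_intervals (hi 0 b h0mem hb)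
              (hi b a hb ha), intervalIntegral.integral_add_adjacent_intervals
              (hi 0 a h0mem ha) (hi a T ha hTmem)]
            exact hint0T
          have h2' := hYdiff b a hb ha
          nlinarith
        · have h1' := key_ub b a hb ha hba
          have h2' := hYdiff b a hb ha
          have : T - (T - (a - b)) = a - b := by ring
          rw [this]
          nlinarith
    obtain ⟨d, hd0, hdT, hk1, hk2⟩ := hkey
    have hMle : Y a ≤ 0 := by
      by_contra hcon
      push_neg at hcon
      exact favard_aux L T (Y a) (-Y b) d hL hT hLT hd0 hdT hM0 (by linarith)
        (Or.inl hcon) hk1 hk2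
    have hmge : 0 ≤ Y b := by
      by_contra hcon
      push_neg at hcon
      exact favard_aux L T (Y a) (-Y b) d hL hT hLT hd0 hdT hM0 (by linarith)
        (Or.inr (by linarith)) hk1 hk2
    have h1 := hmax t ht
    have h2 := hmin t ht
    have h3 := hYx t ht
    linarith
end

section
/- Let T > 0 and K_n the n-th Favard constant, L = 1/(K_n T^n), and for n ≡ 2 (mod 4) define τ(t) = 3T/4 for t ∈ [0,T/2] and τ(t) = T/4 for t ∈ (T/2,T]. Then the problem x^{(n)}(t) = L·x(τ(t)), x^{(i)}(0) = x^{(i)}(T) for i = 0,…,n−1, has a non-constant solution; hence the bound T ≥ (L K_n)^{−1/n} is sharp for such n. -/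
open MeasureTheory intervalIntegral

/-!
The solution is `x = Φₙ`, the `n`-fold periodic integral of the square wave
`h(t) = sign (T/2 - t)`: on `[0, T/2]` it is the scaled Euler polynomial
`qₙ(t) = (T/2)ⁿ/n! · Eₙ(2t/T)`, on `(T/2, T]` it is `-qₙ(t - T/2)`. The recursion defining the
Euler numbers gives `q_k(T/2) = -q_k(0)` for `k ≥ 1`, which glues the pieces into periodic
`AC` functions with `Φ_{k+1}' = Φ_k`, and `Φ₀ = h`. Moreover
`Φₙ(3T/4) = -Φₙ(T/4) = -qₙ(T/4) = -Eₙ (T/4)ⁿ/n!` and `(-1)^m q_{2m} > 0` on `(0, T/2)`, so for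
`n ≡ 2 (mod 4)` we get `Φₙ(3T/4) = Kₙ Tⁿ = -Φₙ(T/4)`, i.e. `h = L · Φₙ ∘ τ`.
-/

open Set
open scoped Nat

theorem eulerNumber_of_odd_s17 {j : ℕ} (hj : Odd j) : eulerNumber j = 0 := by
  cases j with
  | zero => simp at hj
  | succ m => rw [eulerNumber, if_pos hj]

theorem sum_range_choose_mul_eulerNumber {k : ℕ} (hk : Even k) (hk0 : k ≠ 0) :
    ∑ j ∈ Finset.range (k + 1), (k.choose j : ℚ) * eulerNumber j = 0 := by
  obtain ⟨m, rfl⟩ : ∃ m, k = m + 1 := ⟨k - 1, by omega⟩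
  have hrec : eulerNumber (m + 1) =
      -∑ j ∈ Finset.range (m + 1), ((m + 1).choose j : ℚ) * eulerNumber j := by
    rw [eulerNumber, if_neg (Nat.not_odd_iff_even.mpr hk), Fin.sum_univ_eq_sum_range
      (fun j => if Even j then ((m + 1).choose j : ℚ) * eulerNumber j else 0)]
    congr 1
    refine Finset.sum_congr rfl fun j _ => ?_
    rcases Nat.even_or_odd j with hj | hj
    · rw [if_pos hj]
    · rw [if_neg (Nat.not_even_iff_odd.mpr hj), eulerNumber_of_odd_s17 hj, mul_zero]
  rw [Finset.sum_range_succ, Nat.choose_self, Nat.cast_one, one_mul, hrec, add_neg_cancel]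

theorem hasDerivAt_sub_pow_succ_div_factorial (m : ℕ) (c t : ℝ) :
    HasDerivAt (fun t => (t - c) ^ (m + 1) / (m + 1)!) ((t - c) ^ m / m !) t := by
  refine (((hasDerivAt_id t).sub_const c).pow (m + 1)).div_const ((m + 1)! : ℝ) |>.congr_deriv ?_
  rw [Nat.factorial_succ]
  push_cast
  field_simp
  simp

/-- `(T/2)^k/k! · E_k(2t/T)` for the `k`-th Euler polynomial `E_k`, expanded about `t = T/4`. -/
noncomputable def scaledEulerPoly (T : ℝ) (k : ℕ) (t : ℝ) : ℝ :=
  ∑ j ∈ Finset.range (k + 1),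
    eulerNumber j * (T / 4) ^ j / j ! * ((t - T / 4) ^ (k - j) / (k - j)!)

namespace scaledEulerPoly

variable (T : ℝ) (k : ℕ)

theorem zero_index (t : ℝ) : scaledEulerPoly T 0 t = 1 := by
  simp [scaledEulerPoly, eulerNumber]

theorem continuous : Continuous (scaledEulerPoly T k) := by
  unfold scaledEulerPoly
  fun_prop

theorem hasDerivAt (t : ℝ) :
    HasDerivAt (scaledEulerPoly T (k + 1)) (scaledEulerPoly T k t) t := by
  have hterm : ∀ j ∈ Finset.range (k + 2), HasDerivAt
      (fun t => eulerNumber j * (T / 4) ^ j / j ! * ((t - T / 4) ^ (k + 1 - j) / (k + 1 - j)!))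
      (if j ≤ k then eulerNumber j * (T / 4) ^ j / j ! * ((t - T / 4) ^ (k - j) / (k - j)!)
        else 0) t := by
    intro j hj
    split_ifs with hjk
    · rw [show k + 1 - j = k - j + 1 by omega]
      exact (hasDerivAt_sub_pow_succ_div_factorial _ _ t).const_mul _
    · rw [show k + 1 - j = 0 by have := Finset.mem_range.mp hj; omega]
      simp only [pow_zero, Nat.factorial_zero, Nat.cast_one, div_one, mul_one]
      exact hasDerivAt_const t _
  refine (HasDerivAt.fun_sum hterm).congr_deriv ?_
  rw [Finset.sum_range_succ, if_neg (by omega), add_zero]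
  exact Finset.sum_congr rfl fun j hj => if_pos (Finset.mem_range_succ_iff.mp hj)

theorem apply_quarter : scaledEulerPoly T k (T / 4) = eulerNumber k * (T / 4) ^ k / k ! := by
  unfold scaledEulerPoly
  rw [Finset.sum_eq_single_of_mem k (Finset.self_mem_range_succ k)]
  · simp
  · intro j hj hjk
    rw [sub_self, zero_pow (by have := Finset.mem_range.mp hj; omega)]
    simp

theorem apply_half : scaledEulerPoly T k (T / 2) =
    (T / 4) ^ k / k ! * ∑ j ∈ Finset.range (k + 1), (k.choose j : ℝ) * eulerNumber j := by
  unfold scaledEulerPoly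
  rw [Finset.mul_sum]
  refine Finset.sum_congr rfl fun j hj => ?_
  have hjk : j ≤ k := Finset.mem_range_succ_iff.mp hj
  have hpow : (T / 4) ^ k = (T / 4) ^ j * (T / 4) ^ (k - j) := by
    rw [← pow_add, Nat.add_sub_cancel' hjk]
  rw [show T / 2 - T / 4 = T / 4 by ring, Nat.cast_choose ℝ hjk, hpow]
  field_simp

theorem apply_zero : scaledEulerPoly T k 0 = (-1) ^ k * scaledEulerPoly T k (T / 2) := by
  unfold scaledEulerPoly
  rw [Finset.mul_sum]
  refine Finset.sum_congr rfl fun j hjk => ?_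
  rcases Nat.even_or_odd j with hj | hj
  · have hsign : (-1 : ℝ) ^ (k - j) = (-1) ^ k := by
      conv_rhs => rw [← Nat.sub_add_cancel (Finset.mem_range_succ_iff.mp hjk), pow_add,
        hj.neg_one_pow, mul_one]
    rw [zero_sub, show T / 2 - T / 4 = T / 4 by ring, neg_pow, hsign]
    ring
  · simp [eulerNumber_of_odd_s17 hj]

variable {k}

theorem apply_half_of_even (hk : Even k) (hk0 : k ≠ 0) : scaledEulerPoly T k (T / 2) = 0 := by
  have hsum : ∑ j ∈ Finset.range (k + 1), (k.choose j : ℝ) * eulerNumber j = 0 := by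
    exact_mod_cast congrArg ((↑) : ℚ → ℝ) (sum_range_choose_mul_eulerNumber hk hk0)
  rw [apply_half, hsum, mul_zero]

theorem apply_half_eq_neg_apply_zero (hk0 : k ≠ 0) :
    scaledEulerPoly T k (T / 2) = -scaledEulerPoly T k 0 := by
  rw [apply_zero]
  rcases Nat.even_or_odd k with hk | hk
  · rw [apply_half_of_even T hk hk0, mul_zero, neg_zero]
  · rw [hk.neg_one_pow, neg_one_mul, neg_neg]

/-- Inductively, `(-1)^{m+1} q_{2m+2}` vanishes at `0` and `T/2` and has second derivative
`-(-1)^m q_{2m} < 0`, so it is strictly concave, hence positive in between. -/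
theorem neg_one_pow_mul_pos {T : ℝ} (hT : 0 < T) (m : ℕ) {t : ℝ} (ht : t ∈ Ioo 0 (T / 2)) :
    0 < (-1) ^ m * scaledEulerPoly T (2 * m) t := by
  induction m generalizing t with
  | zero => simp [zero_index]
  | succ m ih =>
    set c : ℝ := (-1) ^ (m + 1)
    have hderiv2 : deriv^[2] (fun s => c * scaledEulerPoly T (2 * m + 2) s) =
        fun s => c * scaledEulerPoly T (2 * m) s := by
      have hderiv (j : ℕ) : deriv (fun s => c * scaledEulerPoly T (j + 1) s) =
          fun s => c * scaledEulerPoly T j s :=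
        funext fun s => ((hasDerivAt T j s).const_mul c).deriv
      change deriv (deriv fun s => c * scaledEulerPoly T (2 * m + 1 + 1) s) = _
      rw [hderiv, hderiv]
    have hconc :
        StrictConcaveOn ℝ (Icc 0 (T / 2)) fun s => c * scaledEulerPoly T (2 * m + 2) s := by
      refine strictConcaveOn_of_deriv2_neg (convex_Icc _ _)
        ((continuous T _).continuousOn.const_smul c) fun s hs => ?_
      rw [interior_Icc] at hs
      have := ih hs
      rw [hderiv2]
      simp only [c, pow_succ]
      linarith
    have hzero : scaledEulerPoly T (2 * m + 2) 0 = 0 := by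
      rw [apply_zero, apply_half_of_even T ⟨m + 1, by ring⟩ (by omega), mul_zero]
    have hhalf : scaledEulerPoly T (2 * m + 2) (T / 2) = 0 :=
      apply_half_of_even T ⟨m + 1, by ring⟩ (by omega)
    have := hconc.lt_on_openSegment (left_mem_Icc.mpr (by linarith))
      (right_mem_Icc.mpr (by linarith)) (by linarith) (by rwa [openSegment_eq_Ioo (by linarith)])
    simpa [hzero, hhalf, mul_add] using this

end scaledEulerPoly

section Piecewise

variable {f g F G : ℝ → ℝ} {a b c t : ℝ}

theorem intervalIntegrable_piecewise (hf : Continuous f) (hg : Continuous g) (hac : a ≤ c)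
    (hcb : c ≤ b) :
    IntervalIntegrable (fun s => if s ≤ c then f s else g s) volume a b := by
  refine IntervalIntegrable.trans (b := c) ?_ ?_
  · refine (hf.intervalIntegrable a c).congr fun s hs => ?_
    rw [uIoc_of_le hac] at hs
    exact (if_pos hs.2).symm
  · refine (hg.intervalIntegrable c b).congr fun s hs => ?_
    rw [uIoc_of_le hcb] at hs
    exact (if_neg (not_le.mpr hs.1)).symm

theorem integral_piecewise (hF : ∀ x, HasDerivAt F (f x) x) (hG : ∀ x, HasDerivAt G (g x) x)
    (hf : Continuous f) (hg : Continuous g) (hFG : F c = G c) (hac : a ≤ c) (hat : a ≤ t) :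
    ∫ s in a..t, (if s ≤ c then f s else g s) = (if t ≤ c then F t else G t) - F a := by
  have hleft {t : ℝ} (hat : a ≤ t) (htc : t ≤ c) :
      ∫ s in a..t, (if s ≤ c then f s else g s) = F t - F a := by
    rw [← integral_eq_sub_of_hasDerivAt (fun x _ => hF x) (hf.intervalIntegrable a t)]
    refine integral_congr fun s hs => ?_
    rw [uIcc_of_le hat] at hs
    exact if_pos (hs.2.trans htc)
  split_ifs with htc
  · exact hleft hat htc
  have hct : c ≤ t := le_of_not_ge htc
  have hright : ∫ s in c..t, (if s ≤ c then f s else g s) = G t - G c := by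
    rw [← integral_eq_sub_of_hasDerivAt (fun x _ => hG x) (hg.intervalIntegrable c t)]
    refine integral_congr_ae (Filter.Eventually.of_forall fun s hs => ?_)
    rw [uIoc_of_le hct] at hs
    exact if_neg (not_le.mpr hs.1)
  rw [← integral_add_adjacent_intervals (intervalIntegrable_piecewise hf hg hac le_rfl)
    (intervalIntegrable_piecewise hf hg le_rfl hct), hleft hac le_rfl, hright, hFG]
  ring

end Piecewise

/-- The `k`-fold periodic integral of the square wave `sign (T/2 - t)` on `[0, T]`. -/
noncomputable def squareWaveIntegral (T : ℝ) (k : ℕ) (t : ℝ) : ℝ :=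
  if t ≤ T / 2 then scaledEulerPoly T k t else -scaledEulerPoly T k (t - T / 2)

namespace squareWaveIntegral

theorem zero_index (T t : ℝ) : squareWaveIntegral T 0 t = if t ≤ T / 2 then 1 else -1 := by
  simp only [squareWaveIntegral, scaledEulerPoly.zero_index]

variable {T : ℝ} (hT : 0 < T) (k : ℕ)
include hT

theorem intervalIntegrable : IntervalIntegrable (squareWaveIntegral T k) volume 0 T :=
  intervalIntegrable_piecewise (scaledEulerPoly.continuous T k)
    ((scaledEulerPoly.continuous T k).comp (continuous_sub_right _)).neg (by linarith) (by linarith)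

theorem eq_add_integral {t : ℝ} (ht : t ∈ Icc 0 T) :
    squareWaveIntegral T (k + 1) t =
      squareWaveIntegral T (k + 1) 0 + ∫ s in (0 : ℝ)..t, squareWaveIntegral T k s := by
  have hshift (x : ℝ) : HasDerivAt (fun s => -scaledEulerPoly T (k + 1) (s - T / 2))
      (-scaledEulerPoly T k (x - T / 2)) x :=
    ((scaledEulerPoly.hasDerivAt T k (x - T / 2)).comp_sub_const x (T / 2)).neg
  have hglue :
      scaledEulerPoly T (k + 1) (T / 2) = -scaledEulerPoly T (k + 1) (T / 2 - T / 2) := by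
    rw [sub_self, scaledEulerPoly.apply_half_eq_neg_apply_zero T (Nat.succ_ne_zero k)]
  unfold squareWaveIntegral
  rw [if_pos (by linarith : (0 : ℝ) ≤ T / 2), integral_piecewise (scaledEulerPoly.hasDerivAt T k)
    hshift (scaledEulerPoly.continuous T k)
    ((scaledEulerPoly.continuous T k).comp (continuous_sub_right _)).neg hglue (by linarith) ht.1]
  ring

theorem apply_zero_eq_apply_period :
    squareWaveIntegral T (k + 1) 0 = squareWaveIntegral T (k + 1) T := by
  rw [squareWaveIntegral, squareWaveIntegral, if_pos (by linarith), if_neg (by linarith),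
    show T - T / 2 = T / 2 by ring,
    scaledEulerPoly.apply_half_eq_neg_apply_zero T (Nat.succ_ne_zero k), neg_neg]

theorem periodicACSol (n : ℕ) :
    PeriodicACSol n T (squareWaveIntegral T n) (squareWaveIntegral T 0) := by
  refine ⟨fun i => squareWaveIntegral T (n - i), by simp, by simp, fun i hi => ?_⟩
  obtain ⟨j, hj⟩ : ∃ j, n - i = j + 1 := ⟨n - i - 1, by omega⟩
  simp only [hj, show n - (i + 1) = j by omega]
  exact ⟨intervalIntegrable hT j, fun t ht => eq_add_integral hT j ht,
    apply_zero_eq_apply_period hT j⟩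

end squareWaveIntegral

theorem favardK_mul_pow_eq_abs_scaledEulerPoly {n : ℕ} (hn : Even n) (T : ℝ) :
    (favardK n : ℝ) * T ^ n = |scaledEulerPoly T n (T / 4)| := by
  rw [scaledEulerPoly.apply_quarter, abs_div, abs_mul, abs_of_nonneg (hn.pow_nonneg (T / 4)),
    Nat.abs_cast, favardK, if_neg (Nat.not_odd_iff_even.mpr hn)]
  push_cast
  rw [div_pow]
  ring

/-- Sharpness of the period bound for `n ≡ 2 (mod 4)`: with `L = 1/(Kₙ·Tⁿ)` and the
two-valued deviation `τ(t) = 3T/4` on `[0,T/2]`, `τ(t) = T/4` on `(T/2,T]`, the periodic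
problem `x⁽ⁿ⁾ = L·x(τ(·))` has a non-constant solution. -/
theorem sharpness_n_mod_four_eq_two (n : ℕ) (hn : n % 4 = 2) (T : ℝ) (hT : 0 < T) :
    ∃ x g : ℝ → ℝ, PeriodicACSol n T x g ∧
      (g =ᵐ[volume.restrict (Set.Icc (0 : ℝ) T)]
        fun t => (1 / ((favardK n : ℝ) * T ^ n)) *
          x (if t ≤ T / 2 then 3 * T / 4 else T / 4)) ∧
      ¬ ∀ t ∈ Set.Icc (0 : ℝ) T, x t = x 0 := by
  obtain ⟨m, rfl, hm⟩ : ∃ m, n = 2 * m ∧ Odd m := ⟨n / 2, by omega, ⟨n / 4, by omega⟩⟩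
  have hneg : scaledEulerPoly T (2 * m) (T / 4) < 0 := by
    have := scaledEulerPoly.neg_one_pow_mul_pos hT m (t := T / 4) ⟨by linarith, by linarith⟩
    rw [hm.neg_one_pow] at this
    linarith
  have hK : (favardK (2 * m) : ℝ) * T ^ (2 * m) = -scaledEulerPoly T (2 * m) (T / 4) := by
    rw [favardK_mul_pow_eq_abs_scaledEulerPoly (even_two_mul m), abs_of_neg hneg]
  have hquarter : squareWaveIntegral T (2 * m) (T / 4) = scaledEulerPoly T (2 * m) (T / 4) :=
    if_pos (by linarith)
  have hthreequarters :
      squareWaveIntegral T (2 * m) (3 * T / 4) = -scaledEulerPoly T (2 * m) (T / 4) := by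
    rw [squareWaveIntegral, if_neg (by linarith), show 3 * T / 4 - T / 2 = T / 4 by ring]
  refine ⟨squareWaveIntegral T (2 * m), squareWaveIntegral T 0,
    squareWaveIntegral.periodicACSol hT _, Filter.Eventually.of_forall fun t => ?_, fun hconst => ?_⟩
  · beta_reduce
    rw [squareWaveIntegral.zero_index, hK]
    have hne := hneg.ne
    split_ifs
    · rw [hthreequarters]
      field_simp
    · rw [hquarter]
      field_simp
  · have := (hconst (T / 4) ⟨by linarith, by linarith⟩).trans
      (hconst (3 * T / 4) ⟨by linarith, by linarith⟩).symm
    rw [hquarter, hthreequarters] at this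
    linarith
end

section
/- Let p : ℝ → ℝ be positive, locally integrable, and T-periodic, and suppose the first-order equation x'(t) = p(t)·max_{s∈[τ(t),θ(t)]} x(s) (with measurable τ ≤ θ) has a non-constant T-periodic absolutely continuous solution. Then ∫_0^T p(t) dt ≥ 4. -/
open MeasureTheory intervalIntegral

/-- For a first-order equation with "maxima" `x' = p(t)·max_{s∈[τ(t),θ(t)]} x(s)` with a
positive, locally integrable, `T`-periodic coefficient `p`: if there is a non-constant
`T`-periodic absolutely continuous solution, then `∫₀ᵀ p ≥ 4`. -/
theorem equations_with_maxima_L1_bound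
    (T : ℝ) (hT : 0 < T) (p : ℝ → ℝ) (hp : ∀ t, 0 < p t)
    (hploc : LocallyIntegrable p volume) (hpper : Function.Periodic p T)
    (τ θ : ℝ → ℝ) (hτ : Measurable τ) (hθ : Measurable θ) (hτθ : ∀ t, τ t ≤ θ t)
    (x g : ℝ → ℝ) (hxper : Function.Periodic x T)
    (hgloc : LocallyIntegrable g volume)
    (hac : ∀ t : ℝ, x t = x 0 + ∫ s in (0 : ℝ)..t, g s)
    (heq : g =ᵐ[volume] fun t => p t * sSup (x '' Set.Icc (τ t) (θ t)))
    (hnc : ¬ ∀ t : ℝ, x t = x 0) :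
    4 ≤ ∫ t in (0 : ℝ)..T, p t := by
  have hpint : ∀ u v : ℝ, IntervalIntegrable p volume u v := fun u v =>
    intervalIntegrable_iff.2
      ((hploc.integrableOn_isCompact isCompact_uIcc).mono_set Set.uIoc_subset_uIcc)
  have hgint : ∀ u v : ℝ, IntervalIntegrable g volume u v := fun u v =>
    intervalIntegrable_iff.2
      ((hgloc.integrableOn_isCompact isCompact_uIcc).mono_set Set.uIoc_subset_uIcc)
  -- x is continuous
  have hxcont : Continuous x := by
    have : Continuous fun t : ℝ => x 0 + ∫ s in (0:ℝ)..t, g s :=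
      continuous_const.add (intervalIntegral.continuous_primitive (fun a b => hgint a b) 0)
    exact this.congr fun t => (hac t).symm
  -- extremes on [0, T]
  obtain ⟨a, haI, hamax⟩ := isCompact_Icc.exists_isMaxOn (Set.nonempty_Icc.2 hT.le)
    hxcont.continuousOn
  obtain ⟨b, hbI, hbmin⟩ := isCompact_Icc.exists_isMinOn (Set.nonempty_Icc.2 hT.le)
    hxcont.continuousOn
  set M := x a with hMdef
  set m := x b with hmdef
  -- global bounds via periodicity
  have hxM : ∀ s, x s ≤ M := by
    intro s
    obtain ⟨y, hy, hxy⟩ := hxper.exists_mem_Ico₀ hT s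
    rw [hxy]
    exact hamax (Set.mem_Icc.2 ⟨hy.1, hy.2.le⟩)
  have hxm : ∀ s, m ≤ x s := by
    intro s
    obtain ⟨y, hy, hxy⟩ := hxper.exists_mem_Ico₀ hT s
    rw [hxy]
    exact hbmin (Set.mem_Icc.2 ⟨hy.1, hy.2.le⟩)
  -- bounds on the sup term
  have hbdd : ∀ t, BddAbove (x '' Set.Icc (τ t) (θ t)) := fun t =>
    ⟨M, by rintro y ⟨s, -, rfl⟩; exact hxM s⟩
  have hSle : ∀ t, sSup (x '' Set.Icc (τ t) (θ t)) ≤ M := fun t =>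
    csSup_le ((Set.nonempty_Icc.2 (hτθ t)).image x) (by rintro y ⟨s, -, rfl⟩; exact hxM s)
  have hSge : ∀ t, m ≤ sSup (x '' Set.Icc (τ t) (θ t)) := fun t =>
    le_trans (hxm (τ t)) (le_csSup (hbdd t) ⟨τ t, Set.left_mem_Icc.2 (hτθ t), rfl⟩)
  -- increments of x as integrals of g
  have hdiff : ∀ u v : ℝ, x v - x u = ∫ s in u..v, g s := by
    intro u v
    have h := intervalIntegral.integral_interval_sub_left (hgint 0 v) (hgint 0 u)
    rw [hac v, hac u]
    linarith [h]
  -- upper and lower estimates for increments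
  have key_up : ∀ u v : ℝ, u ≤ v → x v - x u ≤ M * ∫ t in u..v, p t := by
    intro u v huv
    rw [hdiff u v, ← intervalIntegral.integral_const_mul]
    refine intervalIntegral.integral_mono_ae huv (hgint u v) ((hpint u v).const_mul M) ?_
    filter_upwards [heq] with t ht
    rw [ht]
    nlinarith [hp t, hSle t]
  have key_lo : ∀ u v : ℝ, u ≤ v → m * (∫ t in u..v, p t) ≤ x v - x u := by
    intro u v huv
    rw [hdiff u v, ← intervalIntegral.integral_const_mul]
    refine intervalIntegral.integral_mono_ae huv ((hpint u v).const_mul m) (hgint u v) ?_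
    filter_upwards [heq] with t ht
    rw [ht]
    nlinarith [hp t, hSge t]
  have hpnonneg : ∀ u v : ℝ, u ≤ v → 0 ≤ ∫ t in u..v, p t := fun u v huv =>
    intervalIntegral.integral_nonneg huv fun t _ => (hp t).le
  -- m < M, since x is non-constant
  have hmM : m < M := by
    by_contra h
    push_neg at h
    apply hnc
    intro t
    have h1 := hxM t; have h2 := hxm t
    have h3 := hxM 0; have h4 := hxm 0
    linarith
  -- 0 < M
  have hMpos : 0 < M := by
    by_contra h
    push_neg at h
    -- x is nonincreasing, and periodic, hence constant on [0,T]
    have mono : ∀ u v : ℝ, u ≤ v → x v ≤ x u := by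
      intro u v huv
      have := key_up u v huv
      nlinarith [hpnonneg u v huv]
    have hx0T : x T = x 0 := by simpa using (hxper 0)
    have hconst : ∀ t ∈ Set.Icc (0:ℝ) T, x t = x 0 := by
      intro t ht
      have h1 := mono 0 t ht.1
      have h2 := mono t T ht.2
      linarith
    have := hconst a haI
    have := hconst b hbI
    rw [hMdef, hmdef] at hmM
    linarith
  -- m < 0
  have hmneg : m < 0 := by
    by_contra h
    push_neg at h
    have mono : ∀ u v : ℝ, u ≤ v → x u ≤ x v := by
      intro u v huv
      have := key_lo u v huv
      nlinarith [hpnonneg u v huv]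
    have hx0T : x T = x 0 := by simpa using (hxper 0)
    have hconst : ∀ t ∈ Set.Icc (0:ℝ) T, x t = x 0 := by
      intro t ht
      have h1 := mono 0 t ht.1
      have h2 := mono t T ht.2
      linarith
    have := hconst a haI
    have := hconst b hbI
    rw [hMdef, hmdef] at hmM
    linarith
  -- choose the point where the minimum is attained after a
  set d : ℝ := if a ≤ b then b else b + T with hddef
  have had : a ≤ d := by
    rw [hddef]
    split_ifs with h
    · exact h
    · linarith [haI.2, hbI.1]
  have hdaT : d ≤ a + T := by
    rw [hddef]
    split_ifs with h
    · linarith [hbI.2, haI.1]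
    · push_neg at h; linarith
  have hxd : x d = m := by
    rw [hddef]
    split_ifs with h
    · rfl
    · exact hxper b
  have hxaT : x (a + T) = M := hxper a
  -- the two estimates
  have h1 : m * (∫ t in a..d, p t) ≤ m - M := by
    have := key_lo a d had
    rw [hxd] at this
    linarith
  have h2 : M - m ≤ M * ∫ t in d..(a + T), p t := by
    have := key_up d (a + T) hdaT
    rw [hxd, hxaT] at this
    linarith
  -- sum of integrals is the full-period integral
  have hsum : (∫ t in a..d, p t) + (∫ t in d..(a+T), p t) = ∫ t in (0:ℝ)..T, p t := by
    rw [intervalIntegral.integral_add_adjacent_intervals (hpint a d) (hpint d (a+T))]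
    have := hpper.intervalIntegral_add_eq a 0
    simpa using this
  set I₁ := ∫ t in a..d, p t
  set I₂ := ∫ t in d..(a+T), p t
  rw [← hsum]
  nlinarith [sq_nonneg (M + m), mul_pos hMpos (neg_pos.2 hmneg),
    mul_le_mul_of_nonneg_left h1 (le_of_lt hMpos),
    mul_le_mul_of_nonneg_left h2 (neg_nonneg.2 hmneg.le)]
end
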